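/- The global category test cannot be manipulated: for every Borel probability measure ζ on Δ(Ω), the set of paths s such that ζ({P : s ∈ Â_P}) = 0 (the revelation set R^0_ζ) is the complement of a first category subset of Ω. -/

import Mathlib

open MeasureTheory Set
open scoped ENNReal

/-- The space of paths `Ω = {0,1}^ℕ`. -/
abbrev Omega : Type := ℕ → Bool

/-- The cylinder of all extensions of the first `t` coordinates of `s`. -/
def cyl (s : Omega) (t : ℕ) : Set Omega := {x | ∀ i < t, x i = s i}

/-- `t` is the least natural number with `P (C(sᵢ|t) \ {sᵢ}) ≤ b`. -/
def IsLeastCut (P : Measure Omega) (si : Omega) (b : ℝ≥0∞) (t : ℕ) : Prop :=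
  P (cyl si t \ {si}) ≤ b ∧ ∀ u < t, ¬ P (cyl si u \ {si}) ≤ b

/-- The acceptance set `Â_P = ⋃ k (Ω \ ⋃ i C(sⁱ|t(i,k))) ∪ S` of the global category test. -/
def Ahat (S : ℕ → Omega) (t : ℕ → ℕ → ℕ) : Set Omega :=
  (⋃ k, (⋃ i, cyl (S i) (t i k))ᶜ) ∪ Set.range S

/-! Each `P ↦ t P i k` is Borel, because `t P i k ≤ n` says that `P` gives measure at most `b` to
an open set, a closed condition in the weak topology. Hence, for a finite measure `ζ`, one countable
family of bounds `T m` suffices: `ζ`-almost every `P` satisfies `t P ≤ T m` for some `m`, and then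
`Â_P ⊆ Â_{T m}`. Each `Â_τ` is meagre (a countable union of complements of dense open sets and of
the countable set `S`, in a space without isolated points), hence so is `⋃ m, Â_{T m}`, and every
path outside it is revealed. -/

open Filter Topology

lemma isOpen_cyl (s : Omega) (t : ℕ) : IsOpen (cyl s t) := by
  have h : cyl s t = ⋂ i ∈ Iio t, (fun x : Omega => x i) ⁻¹' {s i} := by
    ext x; simp [cyl]
  rw [h]
  exact (finite_Iio t).isOpen_biInter fun i _ =>
    (continuous_apply i).isOpen_preimage _ (isOpen_discrete _)

lemma cyl_anti (s : Omega) : Antitone (cyl s) :=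
  fun _ _ hab _ hx i hi => hx i (hi.trans_le hab)

lemma mem_cyl_self (s : Omega) (t : ℕ) : s ∈ cyl s t := fun _ _ => rfl

-- `x` is the limit of the points obtained by changing one coordinate `j`, as `j` leaves every
-- finite set.
instance Pi.nhdsNE_neBot {ι β : Type*} [Infinite ι] [TopologicalSpace β] [Nontrivial β]
    (x : ι → β) : NeBot (𝓝[≠] x) := by
  classical
  choose y hy using fun j => exists_ne (x j)
  have hlim : Tendsto (fun j => Function.update x j (y j)) cofinite (𝓝[≠] x) := by
    refine tendsto_nhdsWithin_of_tendsto_nhds_of_eventually_within _ ?_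
      (Eventually.of_forall fun j h => hy j (by simpa using congrFun h j))
    refine tendsto_pi_nhds.mpr fun i => tendsto_const_nhds.congr' ?_
    filter_upwards [eventually_cofinite_ne i] with j hj
    simp [Function.update_of_ne hj.symm]
  exact hlim.neBot

lemma Set.Countable.isMeagre {X : Type*} [TopologicalSpace X] [T1Space X]
    [∀ x : X, NeBot (𝓝[≠] x)] {s : Set X} (hs : s.Countable) : IsMeagre s := by
  rw [← biUnion_of_singleton s]
  exact isMeagre_biUnion hs fun x _ =>
    residual_of_dense_open isOpen_compl_singleton (dense_compl_singleton x)

lemma isMeagre_Ahat {S : ℕ → Omega} (hS : DenseRange S) (τ : ℕ → ℕ → ℕ) :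
    IsMeagre (Ahat S τ) := by
  refine IsMeagre.union (isMeagre_iUnion fun k => ?_) (countable_range S).isMeagre
  have hopen : IsOpen (⋃ i, cyl (S i) (τ i k)) := isOpen_iUnion fun i => isOpen_cyl _ _
  have hdense : Dense (⋃ i, cyl (S i) (τ i k)) :=
    hS.mono (range_subset_iff.mpr fun i => mem_iUnion_of_mem i (mem_cyl_self _ _))
  rw [IsMeagre, compl_compl]
  exact residual_of_dense_open hopen hdense

lemma Ahat_mono (S : ℕ → Omega) {τ τ' : ℕ → ℕ → ℕ} (h : τ ≤ τ') : Ahat S τ ⊆ Ahat S τ' :=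
  union_subset_union_left _ <| iUnion_mono fun k => compl_subset_compl.mpr <|
    iUnion_mono fun i => cyl_anti _ (h i k)

lemma IsLeastCut.le_iff {μ : Measure Omega} {s : Omega} {b : ℝ≥0∞} {t : ℕ}
    (h : IsLeastCut μ s b t) (n : ℕ) : t ≤ n ↔ μ (cyl s n \ {s}) ≤ b :=
  ⟨fun htn => (measure_mono (sdiff_subset_sdiff_left (cyl_anti s htn))).trans h.1,
    fun hn => not_lt.mp fun hnt => h.2 n hnt hn⟩

lemma ProbabilityMeasure.lowerSemicontinuous_apply_of_isOpen {X : Type*} [MeasurableSpace X]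
    [TopologicalSpace X] [OpensMeasurableSpace X] [HasOuterApproxClosed X] {G : Set X}
    (hG : IsOpen G) : LowerSemicontinuous fun μ : ProbabilityMeasure X => (μ : Measure X) G :=
  lowerSemicontinuous_iff_le_liminf.mpr fun _ =>
    ProbabilityMeasure.le_liminf_measure_open_of_tendsto tendsto_id hG

lemma measurable_of_isLeastCut [MeasurableSpace (ProbabilityMeasure Omega)]
    [BorelSpace (ProbabilityMeasure Omega)] {s : Omega} {b : ℝ≥0∞}
    {f : ProbabilityMeasure Omega → ℕ} (hf : ∀ P : ProbabilityMeasure Omega, IsLeastCut P s b (f P)) : Measurable f := by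
  refine measurable_of_Iic fun n => ?_
  have hpre : f ⁻¹' Iic n =
      (fun P : ProbabilityMeasure Omega => (P : Measure Omega) (cyl s n \ {s})) ⁻¹' Iic b :=
    ext fun P => (hf P).le_iff n
  rw [hpre]
  exact ((ProbabilityMeasure.lowerSemicontinuous_apply_of_isOpen
    ((isOpen_cyl s n).sdiff isClosed_singleton)).isClosed_preimage b).measurableSet

section BoundedInMeasure

variable {X ι : Type*} [MeasurableSpace X] (μ : Measure X) [IsFiniteMeasure μ]

lemma tendsto_measure_setOf_lt_atTop {f : X → ℕ} (hf : Measurable f) :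
    Tendsto (fun n => μ {x | n < f x}) atTop (𝓝 0) := by
  have hlim := tendsto_measure_iInter_atTop (μ := μ) (s := fun n : ℕ => {x | n < f x})
    (fun n => (measurableSet_lt measurable_const hf).nullMeasurableSet)
    (fun _ _ hmn _ hx => hmn.trans_lt hx) ⟨0, measure_ne_top _ _⟩
  have hempty : ⋂ n : ℕ, {x | n < f x} = ∅ :=
    eq_empty_of_forall_notMem fun x hx => lt_irrefl (f x) (mem_iInter.mp hx (f x))
  rwa [hempty, measure_empty] at hlim

lemma exists_measure_setOf_exists_lt_le [Countable ι] {f : ι → X → ℕ}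
    (hf : ∀ j, Measurable (f j)) {ε : ℝ≥0∞} (hε : ε ≠ 0) :
    ∃ T : ι → ℕ, μ {x | ∃ j, T j < f j x} ≤ ε := by
  obtain ⟨δ, hδ, hδε⟩ := ENNReal.exists_pos_sum_of_countable' hε ι
  choose T hT using fun j => ((tendsto_measure_setOf_lt_atTop μ (hf j)).eventually_lt_const
    (hδ j)).exists
  refine ⟨T, ?_⟩
  calc μ {x | ∃ j, T j < f j x} = μ (⋃ j, {x | T j < f j x}) := by rw [ofPred_exists]
    _ ≤ ∑' j, μ {x | T j < f j x} := measure_iUnion_le _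
    _ ≤ ∑' j, δ j := ENNReal.tsum_le_tsum fun j => (hT j).le
    _ ≤ ε := hδε.le

lemma exists_seq_ae_exists_forall_le [Countable ι] {f : ι → X → ℕ}
    (hf : ∀ j, Measurable (f j)) : ∃ T : ℕ → ι → ℕ, ∀ᵐ x ∂μ, ∃ m, ∀ j, f j x ≤ T m j := by
  choose T hT using fun m : ℕ =>
    exists_measure_setOf_exists_lt_le μ hf (ε := (m : ℝ≥0∞)⁻¹) (by simp)
  refine ⟨T, ae_iff.mpr (nonpos_iff_eq_zero.mp (ge_of_tendsto' ENNReal.tendsto_inv_nat_nhds_zero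
    fun m => (measure_mono fun x hx => ?_).trans (hT m)))⟩
  push Not at hx
  exact hx m

end BoundedInMeasure

/-- The global category test cannot be manipulated: for every Borel probability measure `ζ`
on `Δ(Ω)`, the revelation set `{s : ζ({P : s ∈ Â_P}) = 0}` is the complement of a first
category subset of `Ω`. -/
theorem stmt6 (S : ℕ → Omega) (hS : DenseRange S)
    (t : ProbabilityMeasure Omega → ℕ → ℕ → ℕ)
    (ht : ∀ (P : ProbabilityMeasure Omega) (i k : ℕ),
      IsLeastCut P.toMeasure (S i) ((2 : ℝ≥0∞)⁻¹ ^ (k + i)) (t P i k))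
    (ζ : @Measure (ProbabilityMeasure Omega) (borel (ProbabilityMeasure Omega)))
    (hζ : @IsProbabilityMeasure _ (borel (ProbabilityMeasure Omega)) ζ) :
    IsMeagre {s : Omega | ζ {P : ProbabilityMeasure Omega | s ∈ Ahat S (t P)} = 0}ᶜ := by
  let : MeasurableSpace (ProbabilityMeasure Omega) := borel _
  have : BorelSpace (ProbabilityMeasure Omega) := ⟨rfl⟩
  have := hζ
  obtain ⟨T, hT⟩ := exists_seq_ae_exists_forall_le ζ (f := fun (ik : ℕ × ℕ) P => t P ik.1 ik.2)
    fun ik => measurable_of_isLeastCut fun P => ht P ik.1 ik.2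
  refine (isMeagre_iUnion fun m => isMeagre_Ahat hS fun i k => T m (i, k)).mono ?_
  rw [compl_subset_comm]
  intro s hs
  have hs' : ∀ m, s ∉ Ahat S fun i k => T m (i, k) := by simpa using hs
  refine measure_eq_zero_iff_ae_notMem.mpr ?_
  filter_upwards [hT] with P ⟨m, hm⟩ hP
  exact hs' m (Ahat_mono S (fun i k => hm (i, k)) hP)
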